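/- arXiv:0904.1115 — 3 statements merged into one kernel-verified Lean document; each statement's English description precedes it below -/
import Mathlib

section
/- The function Q(t) = (e^{-αt} - e^{-βt})/(1 - e^{-t}) for t ≠ 0, with Q(0) = β - α, is increasing on all of ℝ if and only if (β - α)(|α - β| - α - β) ≥ 0 and (β - α)(2 - |α - β| - α - β) ≥ 0. -/
/-!
For `t ≠ 0` one computes `(1 - e^{-t})² Q'(t) = φ_t(β) - φ_t(α)` with
`φ_t(u) = e^{-ut} (e^{-t} + u (1 - e^{-t}))`. For `α < β` the two conditions say `α ≤ 0` and
`β ≤ 1`. Then `φ_t` is increasing on `(-∞, 0]`, and `φ_t ≥ φ_t(0) = e^{-t}` on `[0, 1]` by convexity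
of `exp`, so `φ_t(α) ≤ φ_t(β)`; as `Q` is continuous at `0`, it is increasing. Conversely
`Q(t) ~ e^{-αt}` as `t → ∞` and `Q(t) ~ e^{(1-β)t}` as `t → -∞`, which contradicts
`Q(t) ≥ Q(0) > 0` for `t ≥ 0` if `α > 0`, and `Q(t) ≤ Q(0)` for `t ≤ 0` if `β > 1`.
The case `α > β` reduces to `α < β` through `Q_{1-α,1-β}(t) = -Q_{α,β}(-t)`.
-/

open Real Set Filter Topology

theorem Differentiable.continuous_dslope {𝕜 E : Type*} [NontriviallyNormedField 𝕜]
    [NormedAddCommGroup E] [NormedSpace 𝕜 E] {f : 𝕜 → E} (hf : Differentiable 𝕜 f) (a : 𝕜) :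
    Continuous (dslope f a) :=
  continuous_iff_continuousAt.2 fun b => by
    rcases eq_or_ne b a with rfl | hb
    · exact continuousAt_dslope_same.2 (hf b)
    · exact (continuousAt_dslope_of_ne hb).2 (hf b).continuousAt

theorem Monotone.neg_comp_neg {G H : Type*} [AddCommGroup G] [PartialOrder G]
    [IsOrderedAddMonoid G] [AddCommGroup H] [PartialOrder H] [IsOrderedAddMonoid H] {f : G → H}
    (hf : Monotone f) : Monotone fun x => -f (-x) :=
  fun _ _ hab => neg_le_neg (hf (neg_le_neg hab))

lemma one_sub_exp_neg_ne_zero {t : ℝ} (ht : t ≠ 0) : 1 - exp (-t) ≠ 0 := by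
  rwa [sub_ne_zero, ne_comm, Ne, exp_eq_one_iff, neg_eq_zero]

lemma hasDerivAt_exp_neg_mul (c t : ℝ) :
    HasDerivAt (fun s => exp (-c * s)) (-c * exp (-c * t)) t := by
  simpa [mul_comm] using ((hasDerivAt_id t).const_mul (-c)).exp

lemma hasDerivAt_one_sub_exp_neg (t : ℝ) :
    HasDerivAt (fun s => 1 - exp (-s)) (exp (-t)) t := by
  simpa using ((hasDerivAt_neg t).exp).const_sub 1

lemma tendsto_one_sub_exp_div {c : ℝ} (hc : 0 < c) :
    Tendsto (fun s => (1 - exp (-(c * s))) / (1 - exp (-s))) atTop (𝓝 1) := by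
  simpa [Pi.div_def] using
    ((tendsto_exp_neg_atTop_nhds_zero.comp (tendsto_id.const_mul_atTop hc)).const_sub 1).div
      (tendsto_exp_neg_atTop_nhds_zero.const_sub 1) (by norm_num)

noncomputable def Q (α β t : ℝ) : ℝ :=
  if t = 0 then β - α else (exp (-α*t) - exp (-β*t)) / (1 - exp (-t))

lemma Q_zero (α β : ℝ) : Q α β 0 = β - α := if_pos rfl

lemma Q_of_ne_zero (α β : ℝ) {t : ℝ} (ht : t ≠ 0) :
    Q α β t = (exp (-α*t) - exp (-β*t)) / (1 - exp (-t)) := if_neg ht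

lemma Q_self (α : ℝ) : Q α α = 0 := by
  ext t
  simp [Q]

lemma Q_one_sub (α β : ℝ) : Q (1 - α) (1 - β) = fun t => -Q α β (-t) := by
  ext t
  rcases eq_or_ne t 0 with rfl | ht
  · simp [Q_zero]
  · rw [Q_of_ne_zero _ _ ht, Q_of_ne_zero _ _ (neg_ne_zero.2 ht), ← neg_div,
      div_eq_div_iff (one_sub_exp_neg_ne_zero ht) (one_sub_exp_neg_ne_zero (neg_ne_zero.2 ht))]
    simp only [mul_sub, sub_mul, mul_one, ← exp_add]
    ring_nf
    simp only [← exp_add]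
    ring_nf

lemma Q_eq_dslope_div (α β : ℝ) :
    Q α β = fun t => dslope (fun s => exp (-α*s) - exp (-β*s)) 0 t /
      dslope (fun s => 1 - exp (-s)) 0 t := by
  ext t
  rcases eq_or_ne t 0 with rfl | ht
  · rw [dslope_same, dslope_same,
      ((hasDerivAt_exp_neg_mul α 0).fun_sub (hasDerivAt_exp_neg_mul β 0)).deriv,
      (hasDerivAt_one_sub_exp_neg 0).deriv]
    simp [Q]
    ring
  · rw [dslope_of_ne _ ht, dslope_of_ne _ ht, slope_def_field, slope_def_field,
      Q_of_ne_zero α β ht]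
    simp [div_div_div_cancel_right₀ ht]

lemma continuous_Q (α β : ℝ) : Continuous (Q α β) := by
  have hnum : Differentiable ℝ fun s => exp (-α*s) - exp (-β*s) := by fun_prop
  have hden : Differentiable ℝ fun s : ℝ => 1 - exp (-s) := by fun_prop
  rw [Q_eq_dslope_div]
  refine (hnum.continuous_dslope 0).div (hden.continuous_dslope 0) fun t => ?_
  rcases eq_or_ne t 0 with rfl | ht
  · simp [dslope_same, (hasDerivAt_one_sub_exp_neg 0).deriv]
  · rw [dslope_of_ne _ ht, slope_def_field]
    simpa using div_ne_zero (one_sub_exp_neg_ne_zero ht) ht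

noncomputable def phi (t u : ℝ) : ℝ := exp (-u*t) * (exp (-t) + u * (1 - exp (-t)))

lemma hasDerivAt_Q (α β : ℝ) {t : ℝ} (ht : t ≠ 0) :
    HasDerivAt (Q α β) ((phi t β - phi t α) / (1 - exp (-t))^2) t := by
  have hQ : Q α β =ᶠ[𝓝 t] fun s => (exp (-α*s) - exp (-β*s)) / (1 - exp (-s)) := by
    filter_upwards [isOpen_ne.mem_nhds ht] with s hs using Q_of_ne_zero α β hs
  have h := ((hasDerivAt_exp_neg_mul α t).fun_sub (hasDerivAt_exp_neg_mul β t)).fun_div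
    (hasDerivAt_one_sub_exp_neg t) (one_sub_exp_neg_ne_zero ht)
  refine (h.congr_deriv ?_).congr_of_eventuallyEq hQ
  simp only [phi]
  ring

lemma hasDerivAt_phi (t u : ℝ) :
    HasDerivAt (phi t) (exp (-u*t) * (1 - exp (-t) - t * (exp (-t) + u * (1 - exp (-t))))) u := by
  have h := (((hasDerivAt_neg u).mul_const t).exp).fun_mul
    (((hasDerivAt_id' u).mul_const (1 - exp (-t))).const_add (exp (-t)))
  exact h.congr_deriv (by ring)

lemma monotoneOn_phi (t : ℝ) : MonotoneOn (phi t) (Iic 0) := by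
  refine monotoneOn_of_hasDerivWithinAt_nonneg (convex_Iic 0)
    (fun u _ => (hasDerivAt_phi t u).continuousAt.continuousWithinAt)
    (fun u _ => (hasDerivAt_phi t u).hasDerivWithinAt) fun u hu => ?_
  have hu : u < 0 := by simpa using hu
  have h₁ : exp (-t) * (t + 1) ≤ 1 := by
    simpa [← exp_add] using mul_le_mul_of_nonneg_left (add_one_le_exp t) (exp_pos (-t)).le
  have h₂ : 0 ≤ t * (1 - exp (-t)) := by
    rcases le_total 0 t with h | h
    · exact mul_nonneg h (by simpa using h)
    · exact mul_nonneg_of_nonpos_of_nonpos h (by simpa using h)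
  have : 0 ≤ 1 - exp (-t) - t * (exp (-t) + u * (1 - exp (-t))) := by nlinarith [hu.le]
  positivity

lemma phi_zero (t : ℝ) : phi t 0 = exp (-t) := by simp [phi]

lemma exp_neg_le_phi (t : ℝ) {u : ℝ} (hu₀ : 0 ≤ u) (hu₁ : u ≤ 1) : exp (-t) ≤ phi t u := by
  have hconv := convexOn_exp.2 (mem_univ (-t)) (mem_univ 0) (sub_nonneg.2 hu₁) hu₀ (by ring)
  simp only [smul_eq_mul, mul_zero, add_zero, exp_zero, mul_one] at hconv
  calc exp (-t) = exp (-u*t) * exp ((1 - u) * -t) := by rw [← exp_add]; ring_nf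
    _ ≤ phi t u := by rw [phi]; gcongr; linarith

lemma phi_le_phi {α β : ℝ} (hα : α ≤ 0) (hβ : β ≤ 1) (hαβ : α ≤ β) (t : ℝ) :
    phi t α ≤ phi t β := by
  rcases le_total β 0 with hβ₀ | hβ₀
  · exact monotoneOn_phi t hα hβ₀ hαβ
  · calc phi t α ≤ phi t 0 := monotoneOn_phi t hα self_mem_Iic hα
      _ = exp (-t) := phi_zero t
      _ ≤ phi t β := exp_neg_le_phi t hβ₀ hβ

lemma monotone_Q {α β : ℝ} (hα : α ≤ 0) (hβ : β ≤ 1) (hαβ : α ≤ β) : Monotone (Q α β) := by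
  have hmono : ∀ s : Set ℝ, Convex ℝ s → interior s ⊆ {0}ᶜ → MonotoneOn (Q α β) s :=
    fun s hs h0 => monotoneOn_of_hasDerivWithinAt_nonneg hs (continuous_Q α β).continuousOn
      (fun t ht => (hasDerivAt_Q α β (h0 ht)).hasDerivWithinAt)
      fun t _ => div_nonneg (sub_nonneg.2 (phi_le_phi hα hβ hαβ t)) (sq_nonneg _)
  refine (hmono (Iic 0) (convex_Iic 0) ?_).Iic_union_Ici (hmono (Ici 0) (convex_Ici 0) ?_)
  · simp
  · simp

lemma Q_eq_exp_mul_atTop (α β : ℝ) {t : ℝ} (ht : t ≠ 0) :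
    Q α β t = exp (-α*t) * ((1 - exp (-((β - α) * t))) / (1 - exp (-t))) := by
  rw [Q_of_ne_zero α β ht, mul_div_assoc', mul_sub, mul_one, ← exp_add]
  ring_nf

lemma Q_eq_exp_mul_atBot (α β : ℝ) {t : ℝ} (ht : t ≠ 0) :
    Q α β t = exp ((1 - β) * t) * ((1 - exp (-((β - α) * -t))) / (1 - exp (- -t))) := by
  rw [Q_of_ne_zero α β ht, mul_div_assoc', div_eq_div_iff (one_sub_exp_neg_ne_zero ht)
    (one_sub_exp_neg_ne_zero (neg_ne_zero.2 ht))]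
  simp only [mul_sub, sub_mul, mul_one, one_mul, ← exp_add]
  ring_nf

lemma nonpos_of_monotone_Q {α β : ℝ} (hαβ : α < β) (hm : Monotone (Q α β)) : α ≤ 0 := by
  by_contra! hα
  have hlim : Tendsto (Q α β) atTop (𝓝 0) := by
    have h := (tendsto_exp_atBot.comp (tendsto_id.const_mul_atTop_of_neg (neg_neg_of_pos hα))).mul
      (tendsto_one_sub_exp_div (sub_pos.2 hαβ))
    rw [zero_mul] at h
    refine h.congr' ?_
    filter_upwards [eventually_ne_atTop 0] with t ht
    exact (Q_eq_exp_mul_atTop α β ht).symm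
  have : Q α β 0 ≤ 0 := ge_of_tendsto hlim ((eventually_ge_atTop 0).mono fun t ht => hm ht)
  rw [Q_zero] at this
  linarith

lemma le_one_of_monotone_Q {α β : ℝ} (hαβ : α < β) (hm : Monotone (Q α β)) : β ≤ 1 := by
  by_contra! hβ
  have hlim : Tendsto (Q α β) atBot atTop := by
    have h := (tendsto_exp_atTop.comp (tendsto_id.const_mul_atBot_of_neg (sub_neg.2 hβ))).atTop_mul_pos
      one_pos ((tendsto_one_sub_exp_div (sub_pos.2 hαβ)).comp tendsto_neg_atBot_atTop)
    refine h.congr' ?_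
    filter_upwards [eventually_ne_atBot 0] with t ht
    exact (Q_eq_exp_mul_atBot α β ht).symm
  obtain ⟨t, hQt, ht⟩ := ((hlim.eventually_gt_atTop (Q α β 0)).and (eventually_le_atBot 0)).exists
  exact (hm ht).not_gt hQt

lemma monotone_Q_iff {α β : ℝ} (hαβ : α < β) : Monotone (Q α β) ↔ α ≤ 0 ∧ β ≤ 1 :=
  ⟨fun hm => ⟨nonpos_of_monotone_Q hαβ hm, le_one_of_monotone_Q hαβ hm⟩,
    fun h => monotone_Q h.1 h.2 hαβ.le⟩

lemma monotone_Q_one_sub_iff {α β : ℝ} : Monotone (Q (1 - α) (1 - β)) ↔ Monotone (Q α β) := by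
  refine ⟨fun h => ?_, fun h => Q_one_sub α β ▸ h.neg_comp_neg⟩
  simpa [Q_one_sub] using h.neg_comp_neg

theorem stmt3_general (α β : ℝ) :
    Monotone (fun t : ℝ => if t = 0 then β - α else (Real.exp (-α*t) - Real.exp (-β*t)) / (1 - Real.exp (-t))) ↔
      (β - α) * (|α - β| - α - β) ≥ 0 ∧ (β - α) * (2 - |α - β| - α - β) ≥ 0 := by
  show Monotone (Q α β) ↔ _
  rcases lt_trichotomy α β with h | rfl | h
  · rw [monotone_Q_iff h, abs_of_neg (sub_neg.2 h)]
    constructor <;> rintro ⟨h₁, h₂⟩ <;> constructor <;> nlinarith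
  · simp only [Q_self, sub_self, zero_mul, le_refl, and_self, iff_true]
    exact monotone_const
  · rw [← monotone_Q_one_sub_iff, monotone_Q_iff (by linarith), abs_of_pos (sub_pos.2 h)]
    constructor <;> rintro ⟨h₁, h₂⟩ <;> constructor <;> nlinarith

theorem stmt3 (α β : ℝ) (hab : α ≠ β) (h01 : (α, β) ≠ (0, 1)) (h10 : (α, β) ≠ (1, 0)) :
    Monotone (fun t : ℝ => if t = 0 then β - α else (Real.exp (-α*t) - Real.exp (-β*t)) / (1 - Real.exp (-t))) ↔
      (β - α) * (|α - β| - α - β) ≥ 0 ∧ (β - α) * (2 - |α - β| - α - β) ≥ 0 :=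
  stmt3_general α β
end

section
/- If β - α > 1, then the third derivative of ln Q(t) is nonpositive on (0, ∞) and nonnegative on (-∞, 0), where Q(t) = (e^{-αt} - e^{-βt})/(1 - e^{-t}) for t ≠ 0 and Q(0) = β - α (i.e., Q is 3-log-concave on (0,∞) and 3-log-convex on (-∞,0)). -/
/-!
With `c = β - α`, for `t ≠ 0` one has `Q(t) = e^{(1-α-β)t/2} sinh(ct/2) / sinh(t/2)`, so writing
`L = log ∘ sinh`, `(ln Q)'''(t) = (c³ L'''(c t/2) - L'''(t/2)) / 8` with `L'''(u) = 2 cosh u / sinh³ u`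
odd. Since `c > 1`, the sign follows once `u³ L'''(u)` is decreasing on `(0, ∞)`; its derivative has
the sign of `3 sinh u cosh u - u (3 cosh² u - sinh² u)`, which is `≤ 0` for `u ≥ 0` by differentiating
twice.
-/

open Real Set Filter Topology

-- No differentiability is needed: `deriv` of `f (c * ·)` is `c • deriv f (c * ·)` unconditionally.
theorem iteratedDeriv_comp_mul_left {𝕜 : Type*} [NontriviallyNormedField 𝕜] (c : 𝕜) (f : 𝕜 → 𝕜)
    (n : ℕ) (x : 𝕜) :
    iteratedDeriv n (fun x => f (c * x)) x = c ^ n * iteratedDeriv n f (c * x) := by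
  induction n generalizing x with
  | zero => simp
  | succ n ih =>
    rw [iteratedDeriv_succ, funext ih, deriv_const_mul_field, deriv_comp_mul_left, smul_eq_mul,
      iteratedDeriv_succ, pow_succ, mul_assoc]

theorem Set.EqOn.iteratedDeriv_succ {𝕜 F : Type*} [NontriviallyNormedField 𝕜]
    [NormedAddCommGroup F] [NormedSpace 𝕜 F] {s : Set 𝕜} (hs : IsOpen s) {f g g' : 𝕜 → F}
    {n : ℕ} (h : EqOn (iteratedDeriv n f) g s) (hg : ∀ x ∈ s, HasDerivAt g (g' x) x) :
    EqOn (iteratedDeriv (n + 1) f) g' s := fun x hx => by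
  rw [_root_.iteratedDeriv_succ]
  exact ((hg x hx).congr_of_eventuallyEq (eventually_of_mem (hs.mem_nhds hx) h)).deriv

theorem le_of_hasDerivAt_nonneg {f f' : ℝ → ℝ} {a b : ℝ} (hf : ∀ x, HasDerivAt f (f' x) x)
    (hf' : ∀ x, a < x → 0 ≤ f' x) (hab : a ≤ b) : f a ≤ f b :=
  monotoneOn_of_hasDerivWithinAt_nonneg (convex_Ici a)
    (fun x _ => (hf x).continuousAt.continuousWithinAt) (fun x _ => (hf x).hasDerivWithinAt)
    (fun x hx => hf' x (by simpa using hx)) self_mem_Ici hab hab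

namespace Real

theorem exp_sub_exp (a b : ℝ) :
    exp a - exp b = 2 * exp ((a + b) / 2) * sinh ((a - b) / 2) := by
  have ha : exp a = exp ((a + b) / 2) * exp ((a - b) / 2) := by rw [← exp_add]; ring_nf
  have hb : exp b = exp ((a + b) / 2) * exp (-((a - b) / 2)) := by rw [← exp_add]; ring_nf
  rw [sinh_eq, ha, hb]
  ring

theorem sinh_le_mul_cosh {u : ℝ} (hu : 0 ≤ u) : sinh u ≤ u * cosh u := by
  have hd (x : ℝ) : HasDerivAt (fun x => x * cosh x - sinh x) (x * sinh x) x :=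
    (((hasDerivAt_id' x).fun_mul (hasDerivAt_cosh x)).fun_sub (hasDerivAt_sinh x)).congr_deriv
      (by ring)
  have := le_of_hasDerivAt_nonneg hd (fun x hx => mul_nonneg hx.le (sinh_nonneg_iff.2 hx.le)) hu
  simp only [zero_mul, sinh_zero, sub_zero] at this
  linarith

theorem three_mul_sinh_mul_cosh_le {u : ℝ} (hu : 0 ≤ u) :
    3 * (sinh u * cosh u) ≤ u * (3 * cosh u ^ 2 - sinh u ^ 2) := by
  have hd (x : ℝ) : HasDerivAt (fun x => x * (3 * cosh x ^ 2 - sinh x ^ 2) - 3 * (sinh x * cosh x))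
      (4 * sinh x * (x * cosh x - sinh x)) x := by
    refine (((hasDerivAt_id' x).fun_mul ((((hasDerivAt_cosh x).fun_pow 2).const_mul 3).fun_sub
      ((hasDerivAt_sinh x).fun_pow 2))).fun_sub
      (((hasDerivAt_sinh x).fun_mul (hasDerivAt_cosh x)).const_mul 3)).congr_deriv ?_
    push_cast
    ring
  have := le_of_hasDerivAt_nonneg hd (fun x hx => mul_nonneg (by positivity)
    (sub_nonneg.2 (sinh_le_mul_cosh hx.le))) hu
  simp only [zero_mul, sinh_zero] at this
  linarith

theorem antitoneOn_pow_three_mul_cosh_div_sinh_pow_three :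
    AntitoneOn (fun u => u ^ 3 * cosh u / sinh u ^ 3) (Ioi 0) := by
  have hd {u : ℝ} (hu : u ≠ 0) : HasDerivAt (fun u => u ^ 3 * cosh u / sinh u ^ 3)
      (-(u ^ 2 * (u * (3 * cosh u ^ 2 - sinh u ^ 2) - 3 * (sinh u * cosh u))) / sinh u ^ 4) u := by
    have hs := sinh_ne_zero.2 hu
    refine (((hasDerivAt_pow 3 u).fun_mul (hasDerivAt_cosh u)).fun_div
      ((hasDerivAt_sinh u).fun_pow 3) (by positivity)).congr_deriv ?_
    field_simp
    push_cast
    ring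
  refine antitoneOn_of_hasDerivWithinAt_nonpos (convex_Ioi 0)
    (fun u hu => (hd (ne_of_gt hu)).continuousAt.continuousWithinAt)
    (fun u hu => (hd (ne_of_gt (interior_subset hu))).hasDerivWithinAt) fun u hu => ?_
  rw [interior_Ioi] at hu
  have hk := sub_nonneg.2 (three_mul_sinh_mul_cosh_le hu.le)
  exact div_nonpos_of_nonpos_of_nonneg (neg_nonpos.2 (by positivity)) (by positivity)

theorem hasDerivAt_log_sinh {u : ℝ} (hu : u ≠ 0) :
    HasDerivAt (fun u => log (sinh u)) (cosh u / sinh u) u :=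
  (hasDerivAt_sinh u).log (sinh_ne_zero.2 hu)

theorem hasDerivAt_cosh_div_sinh {u : ℝ} (hu : u ≠ 0) :
    HasDerivAt (fun u => cosh u / sinh u) (-(sinh u ^ 2)⁻¹) u := by
  have hs := sinh_ne_zero.2 hu
  refine ((hasDerivAt_cosh u).fun_div (hasDerivAt_sinh u) hs).congr_deriv ?_
  field_simp
  linear_combination -cosh_sq_sub_sinh_sq u

theorem hasDerivAt_neg_inv_sinh_sq {u : ℝ} (hu : u ≠ 0) :
    HasDerivAt (fun u => -(sinh u ^ 2)⁻¹) (2 * cosh u / sinh u ^ 3) u := by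
  have hs := sinh_ne_zero.2 hu
  refine (((hasDerivAt_sinh u).fun_pow 2).fun_inv (by positivity)).fun_neg.congr_deriv ?_
  field_simp
  push_cast
  ring

theorem iteratedDeriv_three_log_sinh {u : ℝ} (hu : u ≠ 0) :
    iteratedDeriv 3 (fun u => log (sinh u)) u = 2 * cosh u / sinh u ^ 3 := by
  have hs : IsOpen {u : ℝ | u ≠ 0} := isOpen_ne
  have h0 : EqOn (iteratedDeriv 0 fun u => log (sinh u)) (fun u => log (sinh u)) {u | u ≠ 0} :=
    fun x _ => congrFun iteratedDeriv_zero x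
  exact (((h0.iteratedDeriv_succ hs fun _ => hasDerivAt_log_sinh).iteratedDeriv_succ hs
    fun _ => hasDerivAt_cosh_div_sinh).iteratedDeriv_succ hs fun _ => hasDerivAt_neg_inv_sinh_sq) hu

theorem iteratedDeriv_three_log_sinh_neg {u : ℝ} (hu : u ≠ 0) :
    iteratedDeriv 3 (fun u => log (sinh u)) (-u) = -iteratedDeriv 3 (fun u => log (sinh u)) u := by
  rw [iteratedDeriv_three_log_sinh (neg_ne_zero.2 hu), iteratedDeriv_three_log_sinh hu, cosh_neg,
    sinh_neg]
  ring

theorem pow_three_mul_iteratedDeriv_three_log_sinh_le {c u : ℝ} (hc : 1 ≤ c) (hu : 0 < u) :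
    c ^ 3 * iteratedDeriv 3 (fun u => log (sinh u)) (c * u) ≤
      iteratedDeriv 3 (fun u => log (sinh u)) u := by
  have hcu : 0 < c * u := by nlinarith
  rw [iteratedDeriv_three_log_sinh hcu.ne', iteratedDeriv_three_log_sinh hu.ne']
  have h := antitoneOn_pow_three_mul_cosh_div_sinh_pow_three hu hcu
    (le_mul_of_one_le_left hu.le hc)
  have hu3 : 0 < u ^ 3 := by positivity
  calc c ^ 3 * (2 * cosh (c * u) / sinh (c * u) ^ 3)
      = 2 * ((c * u) ^ 3 * cosh (c * u) / sinh (c * u) ^ 3) / u ^ 3 := by field_simp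
    _ ≤ 2 * (u ^ 3 * cosh u / sinh u ^ 3) / u ^ 3 := by gcongr
    _ = 2 * cosh u / sinh u ^ 3 := by field_simp

theorem iteratedDeriv_three_log_sinh_le_pow_three_mul {c u : ℝ} (hc : 1 ≤ c) (hu : u < 0) :
    iteratedDeriv 3 (fun u => log (sinh u)) u ≤
      c ^ 3 * iteratedDeriv 3 (fun u => log (sinh u)) (c * u) := by
  have h := pow_three_mul_iteratedDeriv_three_log_sinh_le hc (neg_pos.2 hu)
  rw [mul_neg, iteratedDeriv_three_log_sinh_neg (mul_ne_zero (by positivity) hu.ne),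
    iteratedDeriv_three_log_sinh_neg hu.ne] at h
  linarith

theorem contDiffAt_log_sinh_mul {p t : ℝ} {n : WithTop ℕ∞} (hpt : p * t ≠ 0) :
    ContDiffAt ℝ n (fun t => log (sinh (p * t))) t :=
  (contDiff_sinh.comp (contDiff_const.mul contDiff_id)).contDiffAt.log (sinh_ne_zero.2 hpt)

end Real

-- For `t < 0` both `sinh` values are negative; this is harmless since `Real.log x = log |x|`.
theorem log_exp_sub_exp_div_one_sub_exp {α β t : ℝ} (hαβ : α ≠ β) (ht : t ≠ 0) :
    log ((exp (-α * t) - exp (-β * t)) / (1 - exp (-t))) =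
      (1 - α - β) / 2 * t + log (sinh ((β - α) / 2 * t)) - log (sinh (1 / 2 * t)) := by
  have h1 : sinh ((β - α) / 2 * t) ≠ 0 :=
    sinh_ne_zero.2 (mul_ne_zero (div_ne_zero (sub_ne_zero.2 hαβ.symm) two_ne_zero) ht)
  have h2 : sinh (1 / 2 * t) ≠ 0 := sinh_ne_zero.2 (mul_ne_zero (by norm_num) ht)
  have hnum : exp (-α * t) - exp (-β * t) =
      2 * exp (-(α + β) / 2 * t) * sinh ((β - α) / 2 * t) := by
    rw [exp_sub_exp]; ring_nf
  have hden : 1 - exp (-t) = 2 * exp (-1 / 2 * t) * sinh (1 / 2 * t) := by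
    rw [show (1 : ℝ) - exp (-t) = exp 0 - exp (-t) by rw [exp_zero], exp_sub_exp]; ring_nf
  have hQ : (exp (-α * t) - exp (-β * t)) / (1 - exp (-t)) =
      exp ((1 - α - β) / 2 * t) * (sinh ((β - α) / 2 * t) / sinh (1 / 2 * t)) := by
    rw [hnum, hden, show (1 - α - β) / 2 * t = -(α + β) / 2 * t - -1 / 2 * t by ring, exp_sub]
    field_simp
  rw [hQ, log_mul (exp_ne_zero _) (div_ne_zero h1 h2), log_exp, log_div h1 h2, add_sub_assoc]

theorem iteratedDeriv_three_log_exp_sub_exp_div_one_sub_exp {α β t : ℝ} (hαβ : α ≠ β)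
    (ht : t ≠ 0) :
    iteratedDeriv 3 (fun t => log (if t = 0 then β - α else
        (exp (-α * t) - exp (-β * t)) / (1 - exp (-t)))) t =
      ((β - α) ^ 3 * iteratedDeriv 3 (fun u => log (sinh u)) ((β - α) * (t / 2)) -
        iteratedDeriv 3 (fun u => log (sinh u)) (t / 2)) / 8 := by
  have hc : (β - α) / 2 ≠ 0 := div_ne_zero (sub_ne_zero.2 hαβ.symm) two_ne_zero
  have hF : (fun t => log (if t = 0 then β - α else
        (exp (-α * t) - exp (-β * t)) / (1 - exp (-t)))) =ᶠ[𝓝 t] fun t =>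
      (1 - α - β) / 2 * t + log (sinh ((β - α) / 2 * t)) - log (sinh (1 / 2 * t)) :=
    (eventually_ne_nhds ht).mono fun s hs => by
      simp only [if_neg hs]; exact log_exp_sub_exp_div_one_sub_exp hαβ hs
  have hp := contDiffAt_log_sinh_mul (n := 3) (mul_ne_zero hc ht)
  have hq := contDiffAt_log_sinh_mul (n := 3) (mul_ne_zero one_half_pos.ne' ht)
  rw [(hF.iteratedDeriv 3).eq_of_nhds, iteratedDeriv_fun_sub (by fun_prop) hq,
    iteratedDeriv_fun_add (by fun_prop) hp,
    iteratedDeriv_comp_mul_left (f := fun u => log (sinh u)),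
    iteratedDeriv_comp_mul_left (f := fun u => log (sinh u)),
    iteratedDeriv_const_mul_field (f := fun t => t), iteratedDeriv_fun_id,
    show (β - α) / 2 * t = (β - α) * (t / 2) by ring, show 1 / 2 * t = t / 2 by ring]
  norm_num
  ring

theorem stmt6 (α β : ℝ) (h1 : 1 < β - α) :
    (∀ t ∈ Set.Ioi (0:ℝ), iteratedDeriv 3 (fun t => Real.log ((fun t : ℝ => if t = 0 then β - α else (Real.exp (-α*t) - Real.exp (-β*t)) / (1 - Real.exp (-t))) t)) t ≤ 0) ∧
    (∀ t ∈ Set.Iio (0:ℝ), 0 ≤ iteratedDeriv 3 (fun t => Real.log ((fun t : ℝ => if t = 0 then β - α else (Real.exp (-α*t) - Real.exp (-β*t)) / (1 - Real.exp (-t))) t)) t) := by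
  have hαβ : α ≠ β := (by linarith : α < β).ne
  refine ⟨fun t ht => ?_, fun t ht => ?_⟩
  · rw [iteratedDeriv_three_log_exp_sub_exp_div_one_sub_exp hαβ (ne_of_gt ht)]
    have := pow_three_mul_iteratedDeriv_three_log_sinh_le h1.le (half_pos ht)
    linarith
  · rw [iteratedDeriv_three_log_exp_sub_exp_div_one_sub_exp hαβ (ne_of_lt ht)]
    have := iteratedDeriv_three_log_sinh_le_pow_three_mul h1.le (by linarith [mem_Iio.1 ht] : t / 2 < 0)
    linarith
end

section
/- If (α-β)/(λ-μ) > 1, then the function H(t) = (e^{αt} - e^{βt})/(e^{λt} - e^{μt}) for t ≠ 0, with H(0) = (β-α)/(λ-μ), is logarithmically convex on ℝ; if 0 < (α-β)/(λ-μ) < 1, it is logarithmically concave on ℝ. -/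
/-!
With `a = (α - β) / 2`, `b = (λ - μ) / 2` and `g u = log (sinh u / u)`, the identity
`eˣ - eʸ = 2 e^((x + y) / 2) sinh ((x - y) / 2)` gives `log H t = g (a t) - g (b t) + c t + d`,
so both claims reduce to the convexity of `L t = g (a t) - g (b t)` when `|b| ≤ |a|` (the concave
case is `-L` with `a` and `b` swapped).

The key fact is that `sinh u / u` is even, positive and increasing in `|u|`, since `sinh` is
convex on `[0, ∞)`. For `t > 0` this gives `L t ≥ 0 = L 0` and
`L'' t = t⁻² ((sinh (b t) / (b t))⁻² - (sinh (a t) / (a t))⁻²) ≥ 0`,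
so `L` is convex and nondecreasing on `[0, ∞)`; being even, it is convex on `ℝ`.
-/

open Set Filter Real Topology

lemma convexOn_sinh_Ici : ConvexOn ℝ (Ici 0) sinh :=
  convexOn_of_hasDerivWithinAt2_nonneg (convex_Ici 0) continuous_sinh.continuousOn
    (fun x _ => (hasDerivAt_sinh x).hasDerivWithinAt)
    (fun x _ => (hasDerivAt_cosh x).hasDerivWithinAt)
    (fun _ hx => sinh_nonneg_iff.mpr (interior_subset hx))

lemma monotoneOn_sinh_div_self : MonotoneOn (fun u => sinh u / u) (Ioi 0) := by
  intro x hx y hy hxy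
  simpa using convexOn_sinh_Ici.secant_mono self_mem_Ici (Ioi_subset_Ici_self hx)
    (Ioi_subset_Ici_self hy) hx.ne' hy.ne' hxy

lemma sinh_abs_div_abs (u : ℝ) : sinh |u| / |u| = sinh u / u := by
  rcases abs_choice u with h | h <;> rw [h]
  simp [neg_div_neg_eq]

lemma sinh_div_self_pos {u : ℝ} (hu : u ≠ 0) : 0 < sinh u / u := by
  rw [← sinh_abs_div_abs]
  have := abs_pos.mpr hu
  exact div_pos (sinh_pos_iff.mpr this) this

lemma sinh_div_self_le_of_abs_le {u v : ℝ} (hu : u ≠ 0) (huv : |u| ≤ |v|) :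
    sinh u / u ≤ sinh v / v := by
  rw [← sinh_abs_div_abs u, ← sinh_abs_div_abs v]
  have := abs_pos.mpr hu
  exact monotoneOn_sinh_div_self this (this.trans_le huv) huv

lemma tendsto_sinh_div_self : Tendsto (fun u => sinh u / u) (𝓝[≠] 0) (𝓝 1) := by
  have := hasDerivAt_iff_tendsto_slope.mp (hasDerivAt_sinh 0)
  rw [cosh_zero] at this
  refine this.congr fun u => ?_
  simp [slope_def_field]

/-- The junk value `log (sinh 0 / 0) = log 0 = 0` is also the value of the continuous extension. -/
noncomputable def logSinhDivSelf (u : ℝ) : ℝ := log (sinh u / u)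

@[simp] lemma logSinhDivSelf_zero : logSinhDivSelf 0 = 0 := by simp [logSinhDivSelf]

lemma logSinhDivSelf_neg (u : ℝ) : logSinhDivSelf (-u) = logSinhDivSelf u := by
  simp only [logSinhDivSelf, sinh_neg, neg_div_neg_eq]

lemma logSinhDivSelf_mul_le_mul {a b : ℝ} (hb : b ≠ 0) (hba : |b| ≤ |a|) (t : ℝ) :
    logSinhDivSelf (b * t) ≤ logSinhDivSelf (a * t) := by
  rcases eq_or_ne t 0 with rfl | ht
  · simp
  have hbt := mul_ne_zero hb ht
  exact log_le_log (sinh_div_self_pos hbt)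
    (sinh_div_self_le_of_abs_le hbt (by rw [abs_mul, abs_mul]; gcongr))

lemma hasDerivAt_logSinhDivSelf {u : ℝ} (hu : u ≠ 0) :
    HasDerivAt logSinhDivSelf (cosh u / sinh u - u⁻¹) u := by
  have hs : sinh u ≠ 0 := sinh_ne_zero.mpr hu
  refine (((hasDerivAt_sinh u).div (hasDerivAt_id u) hu).log (div_ne_zero hs hu)).congr_deriv ?_
  simp only [id, Pi.div_apply]
  field_simp

lemma hasDerivAt_coth_sub_inv {u : ℝ} (hu : u ≠ 0) :
    HasDerivAt (fun u => cosh u / sinh u - u⁻¹) (u⁻¹ ^ 2 - (sinh u)⁻¹ ^ 2) u := by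
  have hs : sinh u ≠ 0 := sinh_ne_zero.mpr hu
  refine (((hasDerivAt_cosh u).div (hasDerivAt_sinh u) hs).sub (hasDerivAt_inv hu)).congr_deriv ?_
  field_simp
  linear_combination (-u ^ 2) * cosh_sq_sub_sinh_sq u

lemma continuous_logSinhDivSelf : Continuous logSinhDivSelf := by
  refine continuous_iff_continuousAt.mpr fun u => ?_
  rcases eq_or_ne u 0 with rfl | hu
  · refine continuousWithinAt_compl_self.mp ?_
    have := tendsto_sinh_div_self.log one_ne_zero
    rw [log_one] at this
    rwa [ContinuousWithinAt, logSinhDivSelf_zero]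
  · exact (hasDerivAt_logSinhDivSelf hu).continuousAt

lemma HasDerivAt.comp_const_mul {f : ℝ → ℝ} {f' c t : ℝ} (hf : HasDerivAt f f' (c * t)) :
    HasDerivAt (fun t => f (c * t)) (c * f') t := by
  have := hf.comp t ((hasDerivAt_id t).const_mul c)
  rwa [mul_one, mul_comm] at this

lemma mul_mul_inv_sq_sub_inv_sinh_sq {c t : ℝ} (hc : c ≠ 0) (ht : t ≠ 0) :
    c * (c * ((c * t)⁻¹ ^ 2 - (sinh (c * t))⁻¹ ^ 2)) =
      t⁻¹ ^ 2 * (1 - (sinh (c * t) / (c * t))⁻¹ ^ 2) := by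
  have hs : sinh (c * t) ≠ 0 := sinh_ne_zero.mpr (mul_ne_zero hc ht)
  field_simp

lemma convexOn_Ici_logSinhDivSelf_sub {a b : ℝ} (hb : b ≠ 0) (hba : |b| ≤ |a|) :
    ConvexOn ℝ (Ici 0) fun t => logSinhDivSelf (a * t) - logSinhDivSelf (b * t) := by
  have ha : a ≠ 0 := abs_pos.mp ((abs_pos.mpr hb).trans_le hba)
  have hne {c t : ℝ} (hc : c ≠ 0) (ht : t ∈ interior (Ici (0 : ℝ))) : c * t ≠ 0 := by
    rw [interior_Ici] at ht
    exact mul_ne_zero hc ht.ne'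
  refine convexOn_of_hasDerivWithinAt2_nonneg (convex_Ici 0)
    ((continuous_logSinhDivSelf.comp (continuous_const_mul a)).sub
      (continuous_logSinhDivSelf.comp (continuous_const_mul b))).continuousOn
    (fun t ht => ((hasDerivAt_logSinhDivSelf (hne ha ht)).comp_const_mul.sub
      (hasDerivAt_logSinhDivSelf (hne hb ht)).comp_const_mul).hasDerivWithinAt)
    (fun t ht => (((hasDerivAt_coth_sub_inv (hne ha ht)).comp_const_mul.const_mul a).sub
      ((hasDerivAt_coth_sub_inv (hne hb ht)).comp_const_mul.const_mul b)).hasDerivWithinAt)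
    fun t ht => ?_
  have hSb := sinh_div_self_pos (hne hb ht)
  have hS : sinh (b * t) / (b * t) ≤ sinh (a * t) / (a * t) :=
    sinh_div_self_le_of_abs_le (hne hb ht) (by rw [abs_mul, abs_mul]; gcongr)
  rw [interior_Ici] at ht
  rw [sub_nonneg, mul_mul_inv_sq_sub_inv_sinh_sq ha ht.ne',
    mul_mul_inv_sq_sub_inv_sinh_sq hb ht.ne']
  gcongr t⁻¹ ^ 2 * (1 - ?_)
  exact pow_le_pow_left₀ (inv_nonneg.mpr (hSb.trans_le hS).le) (inv_anti₀ hSb hS) 2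

lemma ConvexOn.monotoneOn_Ici {f : ℝ → ℝ} {c : ℝ} (hf : ConvexOn ℝ (Ici c) f)
    (hmin : ∀ x, c ≤ x → f c ≤ f x) : MonotoneOn f (Ici c) := by
  intro x hx y hy hxy
  rcases (mem_Ici.mp hx).eq_or_lt with rfl | hcx
  · exact hmin y hy
  rcases hxy.eq_or_lt with rfl | hxy
  · rfl
  exact hf.le_right_of_left_le self_mem_Ici hy (Ioo_subset_openSegment ⟨hcx, hxy⟩)
    (hmin x hx)

lemma convexOn_univ_of_even {f : ℝ → ℝ} (heven : Function.Even f)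
    (hf : ConvexOn ℝ (Ici 0) f) (hmono : MonotoneOn f (Ici 0)) : ConvexOn ℝ univ f := by
  have hnorm : f ∘ (norm : ℝ → ℝ) = f := by
    funext x
    rcases abs_choice x with h | h <;> simp [h, heven x]
  have himage : (norm : ℝ → ℝ) '' univ = Ici 0 := by
    rw [image_univ]
    ext x
    exact ⟨fun ⟨y, hy⟩ => hy ▸ norm_nonneg y, fun hx => ⟨x, by simpa using hx⟩⟩
  rw [← hnorm]
  exact (himage ▸ hf).comp convexOn_univ_norm (himage ▸ hmono)

lemma convexOn_logSinhDivSelf_sub {a b : ℝ} (hb : b ≠ 0) (hba : |b| ≤ |a|) :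
    ConvexOn ℝ univ fun t => logSinhDivSelf (a * t) - logSinhDivSelf (b * t) := by
  have hconv := convexOn_Ici_logSinhDivSelf_sub hb hba
  refine convexOn_univ_of_even (fun t => ?_) hconv (hconv.monotoneOn_Ici fun t _ => ?_)
  · simp only [mul_neg, logSinhDivSelf_neg]
  · simpa using logSinhDivSelf_mul_le_mul hb hba t

lemma exp_sub_exp_eq (x y : ℝ) :
    exp x - exp y = 2 * exp ((x + y) / 2) * sinh ((x - y) / 2) := by
  have hx : exp x = exp ((x + y) / 2) * exp ((x - y) / 2) := by rw [← exp_add]; ring_nf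
  have hy : exp y = exp ((x + y) / 2) * exp (-((x - y) / 2)) := by rw [← exp_add]; ring_nf
  rw [sinh_eq, hx, hy]
  ring

/-- `H 0 = (β - α) / (λ - μ)` is the negative of the limit of `H` at `0`; the identity still
holds at `t = 0` because `log (-x) = log x`. -/
lemma log_exp_sub_exp_div_exp_sub_exp {α β lam mu : ℝ} (hab : α ≠ β) (hlm : lam ≠ mu)
    (t : ℝ) :
    log (if t = 0 then (β - α) / (lam - mu)
      else (exp (α * t) - exp (β * t)) / (exp (lam * t) - exp (mu * t))) =
      logSinhDivSelf ((α - β) / 2 * t) - logSinhDivSelf ((lam - mu) / 2 * t) +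
        (α + β - lam - mu) / 2 * t + log ((α - β) / (lam - mu)) := by
  rcases eq_or_ne t 0 with rfl | ht
  · rw [if_pos rfl, ← log_neg_eq_log, ← neg_div, neg_sub]
    simp
  have ha : (α - β) / 2 * t ≠ 0 := mul_ne_zero (by grind) ht
  have hb : (lam - mu) / 2 * t ≠ 0 := mul_ne_zero (by grind) ht
  have hSa := div_ne_zero (sinh_ne_zero.mpr ha) ha
  have hSb := div_ne_zero (sinh_ne_zero.mpr hb) hb
  have hr : (α - β) / (lam - mu) ≠ 0 := div_ne_zero (sub_ne_zero.mpr hab) (sub_ne_zero.mpr hlm)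
  rw [if_neg ht, logSinhDivSelf, logSinhDivSelf, ← log_div hSa hSb,
    ← log_exp ((α + β - lam - mu) / 2 * t), ← log_mul (div_ne_zero hSa hSb) (exp_ne_zero _),
    ← log_mul (by positivity) hr, exp_sub_exp_eq, exp_sub_exp_eq]
  congr 1
  rw [show (α + β - lam - mu) / 2 * t = (α * t + β * t) / 2 - (lam * t + mu * t) / 2 by ring,
    exp_sub]
  have : sinh ((lam * t - mu * t) / 2) ≠ 0 := sinh_ne_zero.mpr (by grind)
  field_simp

theorem stmt12 (α β lam mu : ℝ) (hab : α ≠ β) (hlm : lam ≠ mu) :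
    ((α - β)/(lam - mu) > 1 → ConvexOn ℝ Set.univ (fun t => Real.log ((fun t : ℝ => if t = 0 then (β - α)/(lam - mu) else (Real.exp (α*t) - Real.exp (β*t)) / (Real.exp (lam*t) - Real.exp (mu*t))) t))) ∧
    (0 < (α - β)/(lam - mu) ∧ (α - β)/(lam - mu) < 1 →
      ConcaveOn ℝ Set.univ (fun t => Real.log ((fun t : ℝ => if t = 0 then (β - α)/(lam - mu) else (Real.exp (α*t) - Real.exp (β*t)) / (Real.exp (lam*t) - Real.exp (mu*t))) t))) := by
  have hlm' : 0 < |lam - mu| := abs_pos.mpr (sub_ne_zero.mpr hlm)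
  have hlogH := log_exp_sub_exp_div_exp_sub_exp hab hlm
  refine ⟨fun hr => ?_, fun ⟨hr₀, hr₁⟩ => ?_⟩
  · have hle : |(lam - mu) / 2| ≤ |(α - β) / 2| := by
      rw [abs_div, abs_div, abs_two, div_le_div_iff_of_pos_right two_pos, ← one_le_div hlm',
        ← abs_div]
      exact hr.le.trans (le_abs_self _)
    exact (((convexOn_logSinhDivSelf_sub (by grind) hle).add
      ((LinearMap.mulLeft ℝ _).convexOn convex_univ)).add_const _).congr fun t _ => (hlogH t).symm
  · have hle : |(α - β) / 2| ≤ |(lam - mu) / 2| := by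
      rw [abs_div, abs_div, abs_two, div_le_div_iff_of_pos_right two_pos, ← div_le_one hlm',
        ← abs_div, abs_of_pos hr₀]
      exact hr₁.le
    refine (((convexOn_logSinhDivSelf_sub (by grind) hle).neg.add
      ((LinearMap.mulLeft ℝ ((α + β - lam - mu) / 2)).concaveOn convex_univ)).add_const
        (log ((α - β) / (lam - mu)))).congr fun t _ => ?_
    rw [hlogH t]
    simp only [Pi.add_apply, Pi.neg_apply, LinearMap.mulLeft_apply]
    ring
end
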